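/- arXiv:2003.11506 — 4 statements merged into one kernel-verified Lean document; each statement's English description precedes it below -/
import Mathlib

section
/- (Transfer certificate uniqueness, Lemma 2 of the paper.) Let f be a natural number, A a finite set of authorities with |A| = 3f+1, and B ⊆ A the Byzantine authorities with |B| ≤ f. Let Key and Order be arbitrary types, and for each authority α let signed α : Key → Option Order record the at-most-one transfer order that α has signed for each key. Suppose Q₁, Q₂ ⊆ A are quorums (|Q₁| ≥ 2f+1 and |Q₂| ≥ 2f+1) and there are orders O₁, O₂ and a key k such that every honest authority α ∈ Q₁ \ B satisfies signed α k = some O₁, and every honest authority α ∈ Q₂ \ B satisfies signed α k = some O₂. Then O₁ = O₂: two transfer certificates with the same sender and sequence number certify the same transfer order. -/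
/-- Transfer certificate uniqueness (Lemma 2): two certificates for the same
key (sender address and sequence number) certify the same transfer order. -/
theorem transfer_certificate_uniqueness (f : ℕ) {Authority : Type*} [DecidableEq Authority]
    (A : Finset Authority) (hA : A.card = 3 * f + 1)
    (B : Finset Authority) (hBA : B ⊆ A) (hB : B.card ≤ f)
    {Key Order : Type*} (signed : Authority → Key → Option Order)
    (Q₁ Q₂ : Finset Authority) (hQ₁A : Q₁ ⊆ A) (hQ₂A : Q₂ ⊆ A)
    (hQ₁ : 2 * f + 1 ≤ Q₁.card) (hQ₂ : 2 * f + 1 ≤ Q₂.card)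
    (O₁ O₂ : Order) (k : Key)
    (h₁ : ∀ α ∈ Q₁ \ B, signed α k = some O₁)
    (h₂ : ∀ α ∈ Q₂ \ B, signed α k = some O₂) :
    O₁ = O₂ := by
  have hu : (Q₁ ∪ Q₂).card ≤ 3 * f + 1 := hA ▸ Finset.card_le_card (Finset.union_subset hQ₁A hQ₂A)
  have hi : f + 1 ≤ (Q₁ ∩ Q₂).card := by
    have := Finset.card_union_add_card_inter Q₁ Q₂
    omega
  have hlt : B.card < (Q₁ ∩ Q₂).card := by omega
  have hns : ¬ (Q₁ ∩ Q₂) ⊆ B := fun hs => absurd (Finset.card_le_card hs) (by omega)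
  obtain ⟨α, hαi, hαB⟩ := Finset.not_subset.mp hns
  have e1 := h₁ α (Finset.mem_sdiff.mpr ⟨(Finset.mem_inter.mp hαi).1, hαB⟩)
  have e2 := h₂ α (Finset.mem_sdiff.mpr ⟨(Finset.mem_inter.mp hαi).2, hαB⟩)
  exact Option.some_injective _ (e1 ▸ e2)
end

section
/- (Solvency of FastPay, Theorem 1 of the paper, derived from per-account safety.) Let X be a type of FastPay addresses. Let C be a finite set of certified transfer orders, where each certificate c ∈ C has a sender sender c : X, a recipient recipient c : X ⊕ Primary (either a FastPay address or a Primary address), and a non-negative amount amount c : ℕ. Let funding : X →₀ ℕ be a finitely supported function giving the total funds transferred from the Primary into each FastPay address. Assume account safety holds for every address x : X, namely ∑_{c ∈ C, sender c = x} amount c ≤ funding x + ∑_{c ∈ C, recipient c = Sum.inl x} amount c. Then the sum of the amounts of all certified transfers to the Primary cannot exceed the total funds collected by the smart contract: ∑_{c ∈ C, recipient c ∈ Primary} amount c ≤ ∑_x funding x. -/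
/-- Solvency of FastPay (Theorem 1): assuming account safety for every
address, the total amount of all certified transfers to the Primary cannot
exceed the total funds collected by the smart contract. -/
theorem fastpay_solvency {X Primary Cert : Type*} [DecidableEq X] [DecidableEq Primary]
    (C : Finset Cert) (sender : Cert → X) (recipient : Cert → X ⊕ Primary)
    (amount : Cert → ℕ) (funding : X →₀ ℕ)
    (hsafe : ∀ x : X,
      ∑ c ∈ C.filter (fun c => sender c = x), amount c ≤
        funding x + ∑ c ∈ C.filter (fun c => recipient c = Sum.inl x), amount c) :
    ∑ c ∈ C.filter (fun c => (recipient c).isRight = true), amount c ≤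
      funding.sum (fun _ v => v) := by
  classical
  set g : Cert → X := fun c => match recipient c with
    | Sum.inl x => x
    | Sum.inr _ => sender c with hg
  set T : Finset X := C.image sender ∪ C.image g with hT
  -- summing the send-fibers over T recovers the total sum
  have h1 : ∑ x ∈ T, ∑ c ∈ C.filter (fun c => sender c = x), amount c
      = ∑ c ∈ C, amount c :=
    Finset.sum_fiberwise_of_maps_to
      (fun c hc => Finset.mem_union_left _ (Finset.mem_image_of_mem _ hc)) _
  -- rewrite the receive-fibers via g
  have h2 : ∀ x : X, C.filter (fun c => recipient c = Sum.inl x)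
      = (C.filter (fun c => (recipient c).isLeft)).filter (fun c => g c = x) := by
    intro x
    ext c
    simp only [Finset.mem_filter, and_assoc]
    constructor
    · rintro ⟨hc, hr⟩
      refine ⟨hc, ?_, ?_⟩ <;> simp [hg, hr]
    · rintro ⟨hc, hl, hgx⟩
      refine ⟨hc, ?_⟩
      rcases h : recipient c with y | p
      · simp only [hg, h] at hgx; rw [hgx]
      · rw [h] at hl; simp at hl
  have h3 : ∑ x ∈ T, ∑ c ∈ (C.filter (fun c => (recipient c).isLeft)).filter
        (fun c => g c = x), amount c
      = ∑ c ∈ C.filter (fun c => (recipient c).isLeft), amount c :=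
    Finset.sum_fiberwise_of_maps_to
      (fun c hc => Finset.mem_union_right _
        (Finset.mem_image_of_mem _ (Finset.mem_of_mem_filter _ hc))) _
  -- sum safety over T
  have hsum : ∑ c ∈ C, amount c ≤
      (∑ x ∈ T, funding x) + ∑ c ∈ C.filter (fun c => (recipient c).isLeft), amount c := by
    calc ∑ c ∈ C, amount c
        = ∑ x ∈ T, ∑ c ∈ C.filter (fun c => sender c = x), amount c := h1.symm
      _ ≤ ∑ x ∈ T, (funding x + ∑ c ∈ C.filter (fun c => recipient c = Sum.inl x), amount c) :=
          Finset.sum_le_sum (fun x _ => hsafe x)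
      _ = (∑ x ∈ T, funding x) + ∑ x ∈ T, ∑ c ∈ C.filter
            (fun c => recipient c = Sum.inl x), amount c := Finset.sum_add_distrib
      _ = (∑ x ∈ T, funding x) + ∑ c ∈ C.filter (fun c => (recipient c).isLeft), amount c := by
          rw [← h3]
          congr 1
          exact Finset.sum_congr rfl (fun x _ => by rw [h2 x])
  -- split total sum into right and left parts
  have hsplit : ∑ c ∈ C, amount c
      = (∑ c ∈ C.filter (fun c => (recipient c).isRight = true), amount c)
        + ∑ c ∈ C.filter (fun c => (recipient c).isLeft), amount c := by
    rw [← Finset.sum_filter_add_sum_filter_not C (fun c => (recipient c).isRight = true)]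
    congr 1
    apply Finset.sum_congr _ (fun _ _ => rfl)
    apply Finset.filter_congr
    intro c _
    rcases recipient c with y | p <;> simp
  have hTfund : ∑ x ∈ T, funding x ≤ funding.sum (fun _ v => v) := by
    rw [Finsupp.sum]
    calc ∑ x ∈ T, funding x ≤ ∑ x ∈ T ∪ funding.support, funding x :=
          Finset.sum_le_sum_of_subset Finset.subset_union_left
      _ = ∑ x ∈ funding.support, funding x := by
          exact (Finset.sum_subset Finset.subset_union_right
            (fun x _ hx => Finsupp.notMem_support_iff.mp hx)).symm
  omega
end

section
/- (Redeemability of valid transfer certificates to the Primary, arithmetic core of Proposition 2 of the paper.) Let X be a type of FastPay addresses, C a finite set of certified transfer orders with sender c : X, recipient c : X ⊕ Primary, and amount c : ℕ, and funding : X →₀ ℕ. Assume account safety holds for every address x : X, namely ∑_{c ∈ C, sender c = x} amount c ≤ funding x + ∑_{c ∈ C, recipient c = Sum.inl x} amount c. Let P = {c ∈ C : recipient c ∈ Primary} be the Primary transfer certificates and R ⊆ P the set of already-redeemed certificates. Then for any not-yet-redeemed certificate c₀ ∈ P \ R, the smart contract has sufficient remaining funds to redeem it: amount c₀ + ∑_{c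 ∈ R} amount c ≤ ∑_x funding x. -/
/-- Redeemability of valid transfer certificates to the Primary (arithmetic
core of Proposition 2): the smart contract always retains sufficient funds to
redeem any not-yet-redeemed Primary transfer certificate. -/
theorem fastpay_redeemability {X Primary Cert : Type*} [DecidableEq X] [DecidableEq Primary]
    [DecidableEq Cert]
    (C : Finset Cert) (sender : Cert → X) (recipient : Cert → X ⊕ Primary)
    (amount : Cert → ℕ) (funding : X →₀ ℕ)
    (hsafe : ∀ x : X,
      ∑ c ∈ C.filter (fun c => sender c = x), amount c ≤
        funding x + ∑ c ∈ C.filter (fun c => recipient c = Sum.inl x), amount c)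
    (P : Finset Cert) (hP : P = C.filter (fun c => (recipient c).isRight = true))
    (R : Finset Cert) (hR : R ⊆ P)
    (c₀ : Cert) (hc₀ : c₀ ∈ P \ R) :
    amount c₀ + ∑ c ∈ R, amount c ≤ funding.sum (fun _ v => v) := by
  classical
  set img := C.image sender with himg
  -- total sent = sum over senders of fiberwise sums
  have h1 : ∑ x ∈ img, ∑ c ∈ C.filter (fun c => sender c = x), amount c = ∑ c ∈ C, amount c :=
    Finset.sum_fiberwise_of_maps_to (fun c hc => Finset.mem_image_of_mem sender hc) _
  have h2 : ∑ x ∈ img, funding x ≤ funding.sum (fun _ v => v) := by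
    refine Finset.sum_le_sum_of_ne_zero ?_
    intro x _ hx
    simpa [Finsupp.mem_support_iff] using hx
  have hdisj : (img : Set X).PairwiseDisjoint
      (fun x => C.filter (fun c => recipient c = Sum.inl x)) := by
    intro x _ y _ hxy
    refine Finset.disjoint_left.mpr ?_
    intro c hc hc'
    simp only [Finset.mem_filter] at hc hc'
    exact hxy (by simpa using hc.2.symm.trans hc'.2)
  have h3 : ∑ x ∈ img, ∑ c ∈ C.filter (fun c => recipient c = Sum.inl x), amount c ≤
      ∑ c ∈ C.filter (fun c => (recipient c).isLeft), amount c := by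
    rw [← Finset.sum_biUnion hdisj]
    refine Finset.sum_le_sum_of_subset ?_
    intro c hc
    rw [Finset.mem_biUnion] at hc
    obtain ⟨x, _, hc⟩ := hc
    simp only [Finset.mem_filter] at hc ⊢
    exact ⟨hc.1, by simp [hc.2]⟩
  have key : ∑ c ∈ C, amount c ≤
      funding.sum (fun _ v => v) + ∑ c ∈ C.filter (fun c => (recipient c).isLeft), amount c := by
    calc ∑ c ∈ C, amount c
        = ∑ x ∈ img, ∑ c ∈ C.filter (fun c => sender c = x), amount c := h1.symm
      _ ≤ ∑ x ∈ img, (funding x + ∑ c ∈ C.filter (fun c => recipient c = Sum.inl x), amount c) :=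
          Finset.sum_le_sum (fun x _ => hsafe x)
      _ = (∑ x ∈ img, funding x) +
            ∑ x ∈ img, ∑ c ∈ C.filter (fun c => recipient c = Sum.inl x), amount c :=
          Finset.sum_add_distrib
      _ ≤ funding.sum (fun _ v => v) + ∑ c ∈ C.filter (fun c => (recipient c).isLeft), amount c :=
          add_le_add h2 h3
  have hsplit : ∑ c ∈ C.filter (fun c => (recipient c).isLeft), amount c +
      ∑ c ∈ C.filter (fun c => ¬ (recipient c).isLeft), amount c = ∑ c ∈ C, amount c :=
    Finset.sum_filter_add_sum_filter_not C _ _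
  have hPsum : ∑ c ∈ P, amount c ≤ funding.sum (fun _ v => v) := by
    have hPeq : P = C.filter (fun c => ¬ (recipient c).isLeft) := by
      rw [hP]
      congr 1
      funext c
      cases recipient c <;> simp
    rw [hPeq]
    omega
  have hc₀R : c₀ ∉ R := (Finset.mem_sdiff.mp hc₀).2
  have hsub : insert c₀ R ⊆ P := by
    intro c hc
    rcases Finset.mem_insert.mp hc with h | h
    · exact h ▸ (Finset.mem_sdiff.mp hc₀).1
    · exact hR h
  calc amount c₀ + ∑ c ∈ R, amount c = ∑ c ∈ insert c₀ R, amount c :=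
        (Finset.sum_insert hc₀R).symm
    _ ≤ ∑ c ∈ P, amount c := Finset.sum_le_sum_of_subset hsub
    _ ≤ funding.sum (fun _ v => v) := hPsum
end

section
/- (Nonnegativity of the smart contract balance.) Let X be a type of FastPay addresses, C a finite set of certified transfer orders with sender c : X, recipient c : X ⊕ Primary, and amount c : ℕ, and funding : X →₀ ℕ. Assume account safety holds for every address x : X, namely ∑_{c ∈ C, sender c = x} amount c ≤ funding x + ∑_{c ∈ C, recipient c = Sum.inl x} amount c. Then for every subset R of the Primary transfer certificates (R ⊆ {c ∈ C : recipient c ∈ Primary}), the total redeemed amount never exceeds the total funding: ∑_{c ∈ R} amount c ≤ ∑_x funding x; equivalently, the smart contract balance ∑_x funding x − ∑_{c ∈ R} amount c is non-negative. -/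
/-- Nonnegativity of the smart contract balance: the total amount of redeemed
Primary transfer certificates never exceeds the total funding. -/
theorem fastpay_contract_balance_nonneg {X Primary Cert : Type*}
    [DecidableEq X] [DecidableEq Primary] [DecidableEq Cert]
    (C : Finset Cert) (sender : Cert → X) (recipient : Cert → X ⊕ Primary)
    (amount : Cert → ℕ) (funding : X →₀ ℕ)
    (hsafe : ∀ x : X,
      ∑ c ∈ C.filter (fun c => sender c = x), amount c ≤
        funding x + ∑ c ∈ C.filter (fun c => recipient c = Sum.inl x), amount c)
    (R : Finset Cert) (hR : R ⊆ C.filter (fun c => (recipient c).isRight = true)) :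
    ∑ c ∈ R, amount c ≤ funding.sum (fun _ v => v) := by
  rcases C.eq_empty_or_nonempty with hC | ⟨c0, hc0⟩
  · have : R = ∅ := Finset.subset_empty.mp (by simpa [hC] using hR)
    simp [this]
  have x0 : X := sender c0
  set r : Cert → X := fun c => Sum.elim id (fun _ => x0) (recipient c) with hr
  set D : Finset Cert := C.filter (fun c => (recipient c).isLeft = true) with hD
  set T : Finset X := C.image sender ∪ D.image r with hT
  -- fiber identity for recipients
  have hfib : ∀ x, C.filter (fun c => recipient c = Sum.inl x)
      = D.filter (fun c => r c = x) := by
    intro x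
    ext c
    simp only [hD, Finset.mem_filter, Finset.filter_filter]
    constructor
    · rintro ⟨hc, h⟩
      exact ⟨hc, by simp [h], by simp [hr, h]⟩
    · rintro ⟨hc, hl, hx⟩
      refine ⟨hc, ?_⟩
      rcases h : recipient c with y | p
      · simp only [hr, h, Sum.elim_inl, id] at hx; rw [hx]
      · simp [h] at hl
  -- sum of sender fibers over T equals sum over C
  have hsend : ∑ x ∈ T, ∑ c ∈ C.filter (fun c => sender c = x), amount c
      = ∑ c ∈ C, amount c := by
    apply Finset.sum_fiberwise_of_maps_to
    intro c hc
    exact Finset.mem_union_left _ (Finset.mem_image_of_mem _ hc)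
  -- sum of recipient fibers over T equals sum over D
  have hrec : ∑ x ∈ T, ∑ c ∈ C.filter (fun c => recipient c = Sum.inl x), amount c
      = ∑ c ∈ D, amount c := by
    simp_rw [hfib]
    apply Finset.sum_fiberwise_of_maps_to
    intro c hc
    exact Finset.mem_union_right _ (Finset.mem_image_of_mem _ hc)
  have hsum : ∑ c ∈ C, amount c ≤ (∑ x ∈ T, funding x) + ∑ c ∈ D, amount c := by
    calc ∑ c ∈ C, amount c
        = ∑ x ∈ T, ∑ c ∈ C.filter (fun c => sender c = x), amount c := hsend.symm
      _ ≤ ∑ x ∈ T, (funding x + ∑ c ∈ C.filter (fun c => recipient c = Sum.inl x), amount c) :=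
          Finset.sum_le_sum (fun x _ => hsafe x)
      _ = (∑ x ∈ T, funding x) + ∑ c ∈ D, amount c := by rw [Finset.sum_add_distrib, hrec]
  have hsplit : ∑ c ∈ D, amount c + ∑ c ∈ C.filter (fun c => (recipient c).isRight = true), amount c
      = ∑ c ∈ C, amount c := by
    rw [hD]
    have heq : C.filter (fun c => (recipient c).isRight = true)
        = C.filter (fun c => ¬((recipient c).isLeft = true)) :=
      Finset.filter_congr (fun c _ => by cases h : recipient c <;> simp [h])
    rw [heq]
    exact Finset.sum_filter_add_sum_filter_not _ _ _
  have h1 : ∑ c ∈ R, amount c ≤ ∑ c ∈ C.filter (fun c => (recipient c).isRight = true), amount c :=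
    Finset.sum_le_sum_of_subset hR
  have h2 : ∑ c ∈ C.filter (fun c => (recipient c).isRight = true), amount c
      ≤ ∑ x ∈ T, funding x := by omega
  have h3 : ∑ x ∈ T, funding x ≤ funding.sum (fun _ v => v) := by
    rw [Finsupp.sum]
    calc ∑ x ∈ T, funding x ≤ ∑ x ∈ T ∪ funding.support, funding x :=
          Finset.sum_le_sum_of_subset Finset.subset_union_left
      _ = ∑ x ∈ funding.support, funding x := by
          refine (Finset.sum_subset Finset.subset_union_right ?_).symm
          intro x _ hx
          simpa using hx
  omega
end
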